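/- (Full discrete convergence theorem) Under the hypotheses: A₁ symmetric positive definite with ⟨A₁w,w⟩ ≥ α₁β₁‖w_B‖_M², A₂ symmetric positive semidefinite, M symmetric positive definite, Ã_i = A_i + diag(0, M) invertible, and error recursions Ã₁ e₁^m = (0, M e_{2,B}^{m−1})ᵀ, Ã₂ e₂^m = (0, M e_{1,B}^m)ᵀ for m ≥ 1, there exists C > 0 such that ‖e_i^m‖ ≤ C r^{m+i−2} ‖e_{2,B}^0‖_M for i = 1,2 and all m ≥ 1, where r = 1/(1+α₁β₁) ∈ (0,1). -/

import Mathlib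

/-!
Testing the first subproblem against `e₁^m` and the second against `e₂^m` gives the energy
identities `⟨Ãᵢ eᵢ, eᵢ⟩ = ⟨M g, eᵢ,B⟩`, where `g` is the interface datum. Coercivity of `A₁` in the
`M`-seminorm and Cauchy–Schwarz for `M` turn the first into `‖e₁,B^m‖_M ≤ r ‖e₂,B^(m-1)‖_M`, positive
semidefiniteness of `A₂` turns the second into `‖e₂,B^m‖_M ≤ ‖e₁,B^m‖_M`, so the interface errors
decay like `r^m`. Invertibility of `Ãᵢ` bounds the full errors by the interface data.
-/

open Matrix

section DotProduct

variable {ι κ : Type*} [Fintype ι] [Fintype κ]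

lemma dotProduct_le_sqrt_mul_sqrt (x y : ι → ℝ) : x ⬝ᵥ y ≤ √(x ⬝ᵥ x) * √(y ⬝ᵥ y) := by
  simpa [dotProduct, sq] using Real.sum_mul_le_sqrt_mul_sqrt Finset.univ x y

lemma sqrt_mulVec_dotProduct_le (A : Matrix ι κ ℝ) (x : κ → ℝ) :
    √(A *ᵥ x ⬝ᵥ A *ᵥ x) ≤ √(∑ i, ∑ j, A i j ^ 2) * √(x ⬝ᵥ x) := by
  rw [← Real.sqrt_mul (by positivity)]
  apply Real.sqrt_le_sqrt
  calc A *ᵥ x ⬝ᵥ A *ᵥ x = ∑ i, (∑ j, A i j * x j) ^ 2 := by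
        simp [dotProduct, mulVec, sq]
    _ ≤ ∑ i, (∑ j, A i j ^ 2) * ∑ j, x j ^ 2 :=
        Finset.sum_le_sum fun i _ => Finset.sum_mul_sq_le_sq_mul_sq _ _ _
    _ = (∑ i, ∑ j, A i j ^ 2) * (x ⬝ᵥ x) := by
        simp [← Finset.sum_mul, dotProduct, sq]

lemma exists_sqrt_dotProduct_le_of_isUnit [DecidableEq ι] {A : Matrix ι ι ℝ} (hA : IsUnit A) :
    ∃ C, 0 ≤ C ∧ ∀ v, √(v ⬝ᵥ v) ≤ C * √(A *ᵥ v ⬝ᵥ A *ᵥ v) := by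
  refine ⟨√(∑ i, ∑ j, A⁻¹ i j ^ 2), Real.sqrt_nonneg _, fun v => ?_⟩
  have hv : A⁻¹ *ᵥ (A *ᵥ v) = v := by
    rw [mulVec_mulVec, nonsing_inv_mul A ((isUnit_iff_isUnit_det A).mp hA), one_mulVec]
  simpa only [hv] using sqrt_mulVec_dotProduct_le A⁻¹ (A *ᵥ v)

lemma sumElim_zero_dotProduct (u : κ → ℝ) (v : ι ⊕ κ → ℝ) :
    Sum.elim 0 u ⬝ᵥ v = u ⬝ᵥ (v ∘ Sum.inr) := by
  simp [dotProduct, Fintype.sum_sum_type]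

lemma fromBlocks_zero_mulVec_dotProduct (M : Matrix κ κ ℝ) (v : ι ⊕ κ → ℝ) :
    fromBlocks (0 : Matrix ι ι ℝ) 0 0 M *ᵥ v ⬝ᵥ v = M *ᵥ (v ∘ Sum.inr) ⬝ᵥ (v ∘ Sum.inr) := by
  rw [fromBlocks_mulVec, ← sumElim_zero_dotProduct]
  simp

end DotProduct

namespace Matrix.PosSemidef

variable {n : Type*} [Fintype n] {M : Matrix n n ℝ}

lemma exists_eq_transpose_mul_self (hM : M.PosSemidef) : ∃ B : Matrix n n ℝ, M = Bᵀ * B := by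
  classical
  open scoped MatrixOrder in
  obtain ⟨B, hB⟩ := CStarAlgebra.nonneg_iff_eq_star_mul_self.mp hM.nonneg
  exact ⟨B, by rwa [star_eq_conjTranspose, conjTranspose_eq_transpose_of_trivial] at hB⟩

lemma mulVec_dotProduct_le_sqrt_mul_sqrt (hM : M.PosSemidef) (x y : n → ℝ) :
    M *ᵥ x ⬝ᵥ y ≤ √(M *ᵥ x ⬝ᵥ x) * √(M *ᵥ y ⬝ᵥ y) := by
  obtain ⟨B, rfl⟩ := hM.exists_eq_transpose_mul_self
  simp only [← mulVec_mulVec, mulVec_transpose, ← dotProduct_mulVec]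
  exact dotProduct_le_sqrt_mul_sqrt _ _

lemma exists_sqrt_mulVec_dotProduct_le (hM : M.PosSemidef) :
    ∃ C, 0 ≤ C ∧ ∀ w, √(M *ᵥ w ⬝ᵥ M *ᵥ w) ≤ C * √(M *ᵥ w ⬝ᵥ w) := by
  obtain ⟨B, rfl⟩ := hM.exists_eq_transpose_mul_self
  refine ⟨√(∑ i, ∑ j, Bᵀ i j ^ 2), Real.sqrt_nonneg _, fun w => ?_⟩
  have hquad : (Bᵀ * B) *ᵥ w ⬝ᵥ w = B *ᵥ w ⬝ᵥ B *ᵥ w := by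
    rw [← mulVec_mulVec, mulVec_transpose, ← dotProduct_mulVec]
  rw [hquad, ← mulVec_mulVec]
  exact sqrt_mulVec_dotProduct_le Bᵀ (B *ᵥ w)

end Matrix.PosSemidef

section InterfaceProblem

variable {ι κ : Type*} [Fintype ι] [Fintype κ] {M : Matrix κ κ ℝ}

lemma sqrt_interface_le_of_coercive (A : Matrix (ι ⊕ κ) (ι ⊕ κ) ℝ) (hM : M.PosSemidef)
    {c : ℝ} (hc : 0 < 1 + c) {v : ι ⊕ κ → ℝ} {w : κ → ℝ}
    (hcoer : c * (M *ᵥ (v ∘ Sum.inr) ⬝ᵥ (v ∘ Sum.inr)) ≤ A *ᵥ v ⬝ᵥ v)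
    (hv : (A + fromBlocks 0 0 0 M) *ᵥ v = Sum.elim (0 : ι → ℝ) (M *ᵥ w)) :
    √(M *ᵥ (v ∘ Sum.inr) ⬝ᵥ (v ∘ Sum.inr)) ≤ 1 / (1 + c) * √(M *ᵥ w ⬝ᵥ w) := by
  have hq : 0 ≤ M *ᵥ (v ∘ Sum.inr) ⬝ᵥ (v ∘ Sum.inr) := by
    simpa [dotProduct_comm] using hM.dotProduct_mulVec_nonneg (v ∘ Sum.inr)
  set s := √(M *ᵥ (v ∘ Sum.inr) ⬝ᵥ (v ∘ Sum.inr))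
  set t := √(M *ᵥ w ⬝ᵥ w)
  have henergy : A *ᵥ v ⬝ᵥ v + s ^ 2 = M *ᵥ w ⬝ᵥ (v ∘ Sum.inr) := by
    rw [Real.sq_sqrt hq, ← fromBlocks_zero_mulVec_dotProduct, ← add_dotProduct, ← add_mulVec, hv,
      sumElim_zero_dotProduct]
  have hcs : M *ᵥ w ⬝ᵥ (v ∘ Sum.inr) ≤ t * s := hM.mulVec_dotProduct_le_sqrt_mul_sqrt _ _
  have hquad : (1 + c) * s ^ 2 ≤ t * s := by
    nlinarith [Real.sq_sqrt hq]
  rw [one_div_mul_eq_div, le_div_iff₀ hc]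
  rcases (show 0 ≤ s from Real.sqrt_nonneg _).eq_or_lt with hs0 | hspos
  · rw [← hs0, zero_mul]
    exact Real.sqrt_nonneg _
  · nlinarith

lemma exists_sqrt_dotProduct_le_of_interface [DecidableEq ι] [DecidableEq κ]
    {A : Matrix (ι ⊕ κ) (ι ⊕ κ) ℝ} (hA : IsUnit (A + fromBlocks 0 0 0 M)) (hM : M.PosSemidef) :
    ∃ C, 0 ≤ C ∧ ∀ v w, (A + fromBlocks 0 0 0 M) *ᵥ v = Sum.elim (0 : ι → ℝ) (M *ᵥ w) →
      √(v ⬝ᵥ v) ≤ C * √(M *ᵥ w ⬝ᵥ w) := by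
  obtain ⟨C₁, hC₁, hinv⟩ := exists_sqrt_dotProduct_le_of_isUnit hA
  obtain ⟨C₂, hC₂, hMw⟩ := hM.exists_sqrt_mulVec_dotProduct_le
  refine ⟨C₁ * C₂, by positivity, fun v w hv => ?_⟩
  calc √(v ⬝ᵥ v) ≤ C₁ * √(M *ᵥ w ⬝ᵥ M *ᵥ w) := by
        simpa [hv, sumElim_zero_dotProduct] using hinv v
    _ ≤ C₁ * (C₂ * √(M *ᵥ w ⬝ᵥ w)) := by gcongr; exact hMw w
    _ = C₁ * C₂ * √(M *ᵥ w ⬝ᵥ w) := by ring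

end InterfaceProblem

open Matrix in
theorem stmt12_general {n1I n2I nB : ℕ}
    (A₁ : Matrix (Fin n1I ⊕ Fin nB) (Fin n1I ⊕ Fin nB) ℝ)
    (A₂ : Matrix (Fin n2I ⊕ Fin nB) (Fin n2I ⊕ Fin nB) ℝ)
    (M : Matrix (Fin nB) (Fin nB) ℝ)
    (hA₂ : A₂.PosSemidef) (hM : M.PosDef)
    (α₁ β₁ : ℝ) (hα : 0 < α₁) (hβ : 0 < β₁)
    (hcoer : ∀ w : Fin n1I ⊕ Fin nB → ℝ,
      α₁ * β₁ * (M.mulVec (w ∘ Sum.inr) ⬝ᵥ (w ∘ Sum.inr)) ≤ A₁.mulVec w ⬝ᵥ w)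
    (hinv1 : IsUnit (A₁ + Matrix.fromBlocks 0 0 0 M))
    (hinv2 : IsUnit (A₂ + Matrix.fromBlocks 0 0 0 M))
    (e₁ : ℕ → Fin n1I ⊕ Fin nB → ℝ) (e₂ : ℕ → Fin n2I ⊕ Fin nB → ℝ)
    (hrec1 : ∀ m : ℕ, 1 ≤ m →
      (A₁ + Matrix.fromBlocks 0 0 0 M).mulVec (e₁ m)
        = Sum.elim (0 : Fin n1I → ℝ) (M.mulVec (e₂ (m - 1) ∘ Sum.inr)))
    (hrec2 : ∀ m : ℕ, 1 ≤ m →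
      (A₂ + Matrix.fromBlocks 0 0 0 M).mulVec (e₂ m)
        = Sum.elim (0 : Fin n2I → ℝ) (M.mulVec (e₁ m ∘ Sum.inr))) :
    ∃ C > 0, ∀ m : ℕ, 1 ≤ m →
      Real.sqrt (e₁ m ⬝ᵥ e₁ m) ≤
        C * (1 / (1 + α₁ * β₁)) ^ (m - 1) *
          Real.sqrt (M.mulVec (e₂ 0 ∘ Sum.inr) ⬝ᵥ (e₂ 0 ∘ Sum.inr)) ∧
      Real.sqrt (e₂ m ⬝ᵥ e₂ m) ≤
        C * (1 / (1 + α₁ * β₁)) ^ m *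
          Real.sqrt (M.mulVec (e₂ 0 ∘ Sum.inr) ⬝ᵥ (e₂ 0 ∘ Sum.inr)) := by
  set r := 1 / (1 + α₁ * β₁)
  have hc : 0 < 1 + α₁ * β₁ := by positivity
  have hr : 0 ≤ r := by positivity
  have hcontract₁ : ∀ m, √(M *ᵥ (e₁ (m + 1) ∘ Sum.inr) ⬝ᵥ (e₁ (m + 1) ∘ Sum.inr)) ≤
      r * √(M *ᵥ (e₂ m ∘ Sum.inr) ⬝ᵥ (e₂ m ∘ Sum.inr)) := fun m =>
    sqrt_interface_le_of_coercive A₁ hM.posSemidef hc (hcoer _) (hrec1 (m + 1) m.succ_pos)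
  have hcontract₂ : ∀ m, 1 ≤ m → √(M *ᵥ (e₂ m ∘ Sum.inr) ⬝ᵥ (e₂ m ∘ Sum.inr)) ≤
      √(M *ᵥ (e₁ m ∘ Sum.inr) ⬝ᵥ (e₁ m ∘ Sum.inr)) := fun m hm => by
    simpa using sqrt_interface_le_of_coercive A₂ hM.posSemidef (c := 0) (by norm_num)
      (by simpa [dotProduct_comm] using hA₂.dotProduct_mulVec_nonneg (e₂ m)) (hrec2 m hm)
  have hdecay : ∀ m, √(M *ᵥ (e₂ m ∘ Sum.inr) ⬝ᵥ (e₂ m ∘ Sum.inr)) ≤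
      r ^ m * √(M *ᵥ (e₂ 0 ∘ Sum.inr) ⬝ᵥ (e₂ 0 ∘ Sum.inr)) := fun m =>
    le_geom (u := fun k => √(M *ᵥ (e₂ k ∘ Sum.inr) ⬝ᵥ (e₂ k ∘ Sum.inr))) hr m
      fun k _ => (hcontract₂ (k + 1) k.succ_pos).trans (hcontract₁ k)
  obtain ⟨C₁, hC₁, hbound₁⟩ := exists_sqrt_dotProduct_le_of_interface hinv1 hM.posSemidef
  obtain ⟨C₂, hC₂, hbound₂⟩ := exists_sqrt_dotProduct_le_of_interface hinv2 hM.posSemidef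
  refine ⟨C₁ + C₂ + 1, by positivity, fun m hm => ⟨?_, ?_⟩⟩
  · obtain ⟨k, rfl⟩ := Nat.exists_eq_add_of_le' hm
    calc √(e₁ (k + 1) ⬝ᵥ e₁ (k + 1)) ≤ C₁ * √(M *ᵥ (e₂ k ∘ Sum.inr) ⬝ᵥ (e₂ k ∘ Sum.inr)) :=
          hbound₁ _ _ (hrec1 (k + 1) hm)
      _ ≤ (C₁ + C₂ + 1) * (r ^ k * √(M *ᵥ (e₂ 0 ∘ Sum.inr) ⬝ᵥ (e₂ 0 ∘ Sum.inr))) :=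
          mul_le_mul (by linarith) (hdecay k) (Real.sqrt_nonneg _) (by positivity)
      _ = _ := by simp [mul_assoc]
  · obtain ⟨k, rfl⟩ := Nat.exists_eq_add_of_le' hm
    calc √(e₂ (k + 1) ⬝ᵥ e₂ (k + 1))
        ≤ C₂ * √(M *ᵥ (e₁ (k + 1) ∘ Sum.inr) ⬝ᵥ (e₁ (k + 1) ∘ Sum.inr)) :=
          hbound₂ _ _ (hrec2 (k + 1) hm)
      _ ≤ (C₁ + C₂ + 1) * (r * (r ^ k * √(M *ᵥ (e₂ 0 ∘ Sum.inr) ⬝ᵥ (e₂ 0 ∘ Sum.inr)))) :=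
          mul_le_mul (by linarith) ((hcontract₁ k).trans (by gcongr; exact hdecay k))
            (Real.sqrt_nonneg _) (by positivity)
      _ = _ := by ring

open Matrix in
/-- Theorem 5.1: geometric convergence of the discrete Gauss–Seidel type
alternating iteration to the monolithic solution:
‖e_i^m‖ ≤ C r^{m+i−2} ‖e_{2,B}^0‖_M with r = 1/(1+α₁β₁). -/
theorem stmt12 {n1I n2I nB : ℕ}
    (A₁ : Matrix (Fin n1I ⊕ Fin nB) (Fin n1I ⊕ Fin nB) ℝ)
    (A₂ : Matrix (Fin n2I ⊕ Fin nB) (Fin n2I ⊕ Fin nB) ℝ)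
    (M : Matrix (Fin nB) (Fin nB) ℝ)
    (hA₁ : A₁.PosDef) (hA₂ : A₂.PosSemidef) (hM : M.PosDef)
    (α₁ β₁ : ℝ) (hα : 0 < α₁) (hβ : 0 < β₁)
    (hcoer : ∀ w : Fin n1I ⊕ Fin nB → ℝ,
      α₁ * β₁ * (M.mulVec (w ∘ Sum.inr) ⬝ᵥ (w ∘ Sum.inr)) ≤ A₁.mulVec w ⬝ᵥ w)
    (hinv1 : IsUnit (A₁ + Matrix.fromBlocks 0 0 0 M))
    (hinv2 : IsUnit (A₂ + Matrix.fromBlocks 0 0 0 M))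
    (e₁ : ℕ → Fin n1I ⊕ Fin nB → ℝ) (e₂ : ℕ → Fin n2I ⊕ Fin nB → ℝ)
    (hrec1 : ∀ m : ℕ, 1 ≤ m →
      (A₁ + Matrix.fromBlocks 0 0 0 M).mulVec (e₁ m)
        = Sum.elim (0 : Fin n1I → ℝ) (M.mulVec (e₂ (m - 1) ∘ Sum.inr)))
    (hrec2 : ∀ m : ℕ, 1 ≤ m →
      (A₂ + Matrix.fromBlocks 0 0 0 M).mulVec (e₂ m)
        = Sum.elim (0 : Fin n2I → ℝ) (M.mulVec (e₁ m ∘ Sum.inr))) :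
    ∃ C > 0, ∀ m : ℕ, 1 ≤ m →
      Real.sqrt (e₁ m ⬝ᵥ e₁ m) ≤
        C * (1 / (1 + α₁ * β₁)) ^ (m - 1) *
          Real.sqrt (M.mulVec (e₂ 0 ∘ Sum.inr) ⬝ᵥ (e₂ 0 ∘ Sum.inr)) ∧
      Real.sqrt (e₂ m ⬝ᵥ e₂ m) ≤
        C * (1 / (1 + α₁ * β₁)) ^ m *
          Real.sqrt (M.mulVec (e₂ 0 ∘ Sum.inr) ⬝ᵥ (e₂ 0 ∘ Sum.inr)) :=
  stmt12_general A₁ A₂ M hA₂ hM α₁ β₁ hα hβ hcoer hinv1 hinv2 e₁ e₂ hrec1 hrec2
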